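/- arXiv:1502.00494 — 4 statements merged into one kernel-verified Lean document; each statement's English description precedes it below -/
import Mathlib

section
/- Every totally bounded subset of the compact operators on a Hilbert space is uniformly approximable: for every ε > 0 there exists N such that every operator in the subset lies within ε (in operator norm) of some operator of rank at most N. -/
/-! Approximate a compact `T` by `P_K ∘ T`, where `P_K` is the orthogonal projection onto the
span `K` of a finite net of the image of the unit ball; hence every compact operator is a norm
limit of finite rank operators. For a totally bounded family, pick a finite `ε/2`-net of it and
`ε/2`-approximate each of its finitely many members by a finite rank operator: the largest of
these ranks works for the whole family. -/

/-- A collection of operators on a Hilbert space is *uniformly approximable* if for every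
`ε > 0` there is a common `N` such that every member of the collection is within `ε`
(in operator norm) of an operator of rank at most `N`. -/
def UniformlyApproximable {H : Type*} [NormedAddCommGroup H] [InnerProductSpace ℂ H]
    (𝒜 : Set (H →L[ℂ] H)) : Prop :=
  ∀ ε > (0 : ℝ), ∃ N : ℕ, ∀ T ∈ 𝒜, ∃ k : H →L[ℂ] H,
    LinearMap.rank (k : H →ₗ[ℂ] H) ≤ (N : Cardinal) ∧ ‖T - k‖ < ε

open Metric Set Filter Cardinal

theorem TotallyBounded.exists_subset_thickening_of_subset_closure_iUnion
    {α ι : Type*} [PseudoMetricSpace α] [Preorder ι] [IsDirected ι (· ≤ ·)] [Nonempty ι]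
    {s : Set α} (hs : TotallyBounded s) {A : ι → Set α} (hA : Monotone A)
    (hsA : s ⊆ _root_.closure (⋃ i, A i)) {ε : ℝ} (hε : 0 < ε) :
    ∃ i, s ⊆ thickening ε (A i) := by
  obtain ⟨t, hts, htfin, hst⟩ := finite_approx_of_totallyBounded hs (ε / 2) (half_pos hε)
  have hnet : ∀ y ∈ t, ∀ᶠ i in atTop, y ∈ thickening (ε / 2) (A i) := by
    intro y hy
    obtain ⟨a, ha, hya⟩ := Metric.mem_closure_iff.1 (hsA (hts hy)) (ε / 2) (half_pos hε)
    obtain ⟨i, hi⟩ := mem_iUnion.1 ha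
    exact eventually_atTop.2 ⟨i, fun j hij => mem_thickening_iff.2 ⟨a, hA hij hi, hya⟩⟩
  obtain ⟨i, hi⟩ := ((eventually_all_finite htfin).2 hnet).exists
  refine ⟨i, hst.trans (iUnion₂_subset fun y hy => ?_)⟩
  calc ball y (ε / 2) ⊆ thickening (ε / 2) (thickening (ε / 2) (A i)) :=
        ball_subset_thickening (hi y hy) _
    _ ⊆ thickening (ε / 2 + ε / 2) (A i) := thickening_thickening_subset _ _ _
    _ = thickening ε (A i) := by rw [add_halves]

section InnerProductSpace

variable {𝕜 E F : Type*} [RCLike 𝕜] [NormedAddCommGroup E] [NormedSpace 𝕜 E]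
  [NormedAddCommGroup F] [InnerProductSpace 𝕜 F]

theorem Submodule.norm_sub_starProjection_le (K : Submodule 𝕜 F) [K.HasOrthogonalProjection]
    (x : F) {y : F} (hy : y ∈ K) : ‖x - K.starProjection x‖ ≤ ‖x - y‖ := by
  rw [starProjection_minimal]
  exact ciInf_le ⟨0, forall_mem_range.2 fun _ => norm_nonneg _⟩ (⟨y, hy⟩ : K)

theorem TotallyBounded.exists_finiteDimensional_norm_sub_starProjection_lt {s : Set F}
    (hs : TotallyBounded s) {ε : ℝ} (hε : 0 < ε) :
    ∃ (K : Submodule 𝕜 F) (_ : FiniteDimensional 𝕜 K),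
      ∀ x ∈ s, ‖x - K.starProjection x‖ < ε := by
  obtain ⟨t, htfin, hst⟩ := Metric.totallyBounded_iff.1 hs ε hε
  have := FiniteDimensional.span_of_finite 𝕜 htfin
  refine ⟨Submodule.span 𝕜 t, this, fun x hx => ?_⟩
  obtain ⟨y, hy, hxy⟩ := mem_iUnion₂.1 (hst hx)
  calc ‖x - (Submodule.span 𝕜 t).starProjection x‖ ≤ ‖x - y‖ :=
        (Submodule.span 𝕜 t).norm_sub_starProjection_le x (Submodule.subset_span hy)
    _ < ε := by rwa [← dist_eq_norm]

theorem IsCompactOperator.mem_closure_setOf_rank_lt_aleph0 {T : E →L[𝕜] F}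
    (hT : IsCompactOperator T) :
    T ∈ closure {k : E →L[𝕜] F | LinearMap.rank (k : E →ₗ[𝕜] F) < ℵ₀} := by
  refine Metric.mem_closure_iff.2 fun ε hε => ?_
  obtain ⟨C, hC, hTC⟩ := hT.image_closedBall_subset_compact 1
  have hTbd : TotallyBounded (T '' closedBall 0 1) := hC.totallyBounded.subset hTC
  obtain ⟨K, _, hK⟩ :=
    hTbd.exists_finiteDimensional_norm_sub_starProjection_lt (𝕜 := 𝕜) (half_pos hε)
  refine ⟨K.starProjection ∘L T, ?_, ?_⟩
  · calc LinearMap.rank ((K.starProjection ∘L T : E →L[𝕜] F) : E →ₗ[𝕜] F)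
        ≤ LinearMap.rank (K.starProjection : F →ₗ[𝕜] F) := LinearMap.rank_comp_le_left _ _
      _ = Module.rank 𝕜 K :=
        congrArg (fun U : Submodule 𝕜 F => Module.rank 𝕜 U) K.range_starProjection
      _ < ℵ₀ := Module.rank_lt_aleph0 𝕜 K
  · rw [dist_eq_norm]
    refine (ContinuousLinearMap.opNorm_le_of_unit_norm (half_pos hε).le fun x hx => ?_).trans_lt
      (half_lt_self hε)
    exact (hK _ ⟨x, by simp [hx], rfl⟩).le

end InnerProductSpace

theorem totallyBounded_compactOperators_uniformlyApproximable_general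
    {H : Type*} [NormedAddCommGroup H] [InnerProductSpace ℂ H]
    (𝒜 : Set (H →L[ℂ] H)) (hcpt : ∀ T ∈ 𝒜, IsCompactOperator T)
    (htb : TotallyBounded 𝒜) :
    UniformlyApproximable 𝒜 := by
  intro ε hε
  set A : ℕ → Set (H →L[ℂ] H) := fun N => {k | LinearMap.rank (k : H →ₗ[ℂ] H) ≤ N}
  have hA : Monotone A := fun m n hmn k (hk : _ ≤ (m : Cardinal)) =>
    hk.trans (Nat.cast_le.2 hmn)
  have hfinite : {k : H →L[ℂ] H | LinearMap.rank (k : H →ₗ[ℂ] H) < ℵ₀} ⊆ ⋃ N, A N :=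
    fun k hk => mem_iUnion.2 ((lt_aleph0.1 hk).imp fun _ => le_of_eq)
  obtain ⟨N, hN⟩ := htb.exists_subset_thickening_of_subset_closure_iUnion hA
    (fun T hT => closure_mono hfinite (hcpt T hT).mem_closure_setOf_rank_lt_aleph0) hε
  refine ⟨N, fun T hT => ?_⟩
  obtain ⟨k, hk, hTk⟩ := mem_thickening_iff.1 (hN hT)
  exact ⟨k, hk, by rwa [← dist_eq_norm]⟩

/-- Every totally bounded subset of the compact operators on a Hilbert space is uniformly
approximable. -/
theorem totallyBounded_compactOperators_uniformlyApproximable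
    {H : Type*} [NormedAddCommGroup H] [InnerProductSpace ℂ H] [CompleteSpace H]
    (𝒜 : Set (H →L[ℂ] H)) (hcpt : ∀ T ∈ 𝒜, IsCompactOperator T)
    (htb : TotallyBounded 𝒜) :
    UniformlyApproximable 𝒜 :=
  totallyBounded_compactOperators_uniformlyApproximable_general 𝒜 hcpt htb
end

section
/- Let X be a metric space, H a Hilbert space, and ρ : C_b(X) → B(H) a bounded *-homomorphism. The set of uniformly pseudolocal operators is closed in B(H) with respect to the operator norm: if T_n are uniformly pseudolocal and T_n → T in operator norm, then T is uniformly pseudolocal. -/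
open BoundedContinuousFunction

/-- `f ∈ L-Lip_R(X)`: a bounded continuous function which is `L`-Lipschitz, has sup-norm
at most `1`, and whose support has diameter at most `R`. -/
def MemLLipR {X : Type*} [MetricSpace X] (L R : ℝ) (f : X →ᵇ ℂ) : Prop :=
  LipschitzWith (Real.toNNReal L) ⇑f ∧ ‖f‖ ≤ 1 ∧ Metric.diam (Function.support ⇑f) ≤ R

/-- `T` is *uniformly pseudolocal* (w.r.t. `ρ`) if for all `R, L > 0` the collection of
commutators `{[T, ρ(f)] : f ∈ L-Lip_R(X)}` is uniformly approximable. -/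
def UniformlyPseudolocal {X : Type*} [MetricSpace X]
    {H : Type*} [NormedAddCommGroup H] [InnerProductSpace ℂ H] [CompleteSpace H]
    (ρ : (X →ᵇ ℂ) →⋆ₐ[ℂ] (H →L[ℂ] H)) (T : H →L[ℂ] H) : Prop :=
  ∀ R > (0 : ℝ), ∀ L > (0 : ℝ),
    UniformlyApproximable {A | ∃ f : X →ᵇ ℂ, MemLLipR L R f ∧ A = T * ρ f - ρ f * T}

/-
A *-homomorphism between C*-algebras is contractive, so `‖ρ f‖ ≤ 1` for every `f ∈ L-Lip_R(X)`.
Hence `‖[T, ρ f] - [Tₙ, ρ f]‖ ≤ 2 ‖T - Tₙ‖` uniformly in `f`, and the finite-rank approximants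
of the commutators of a single `Tₙ` close to `T` serve for `T` as well.
-/

theorem norm_commutator_sub_commutator_le {A : Type*} [NormedRing A] (S T a : A) :
    ‖(S * a - a * S) - (T * a - a * T)‖ ≤ 2 * ‖a‖ * ‖S - T‖ := by
  have hsplit : (S * a - a * S) - (T * a - a * T) = (S - T) * a - a * (S - T) := by noncomm_ring
  calc ‖(S * a - a * S) - (T * a - a * T)‖
      ≤ ‖(S - T) * a‖ + ‖a * (S - T)‖ := hsplit ▸ norm_sub_le _ _
    _ ≤ ‖S - T‖ * ‖a‖ + ‖a‖ * ‖S - T‖ := add_le_add (norm_mul_le _ _) (norm_mul_le _ _)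
    _ = 2 * ‖a‖ * ‖S - T‖ := by ring

theorem UniformlyApproximable.of_forall_exists_near {H : Type*} [NormedAddCommGroup H]
    [InnerProductSpace ℂ H] {𝒜 : Set (H →L[ℂ] H)}
    (h : ∀ ε > (0 : ℝ), ∃ ℬ, UniformlyApproximable ℬ ∧ ∀ A ∈ 𝒜, ∃ B ∈ ℬ, ‖A - B‖ < ε) :
    UniformlyApproximable 𝒜 := by
  intro ε hε
  obtain ⟨ℬ, hℬ, hnear⟩ := h (ε / 2) (half_pos hε)
  obtain ⟨N, hN⟩ := hℬ (ε / 2) (half_pos hε)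
  refine ⟨N, fun A hA => ?_⟩
  obtain ⟨B, hB, hAB⟩ := hnear A hA
  obtain ⟨k, hk, hBk⟩ := hN B hB
  refine ⟨k, hk, ?_⟩
  calc ‖A - k‖ ≤ ‖A - B‖ + ‖B - k‖ := norm_sub_le_norm_sub_add_norm_sub A B k
    _ < ε / 2 + ε / 2 := add_lt_add hAB hBk
    _ = ε := add_halves ε

theorem uniformlyPseudolocal_closed_general
    {X : Type*} [MetricSpace X]
    {H : Type*} [NormedAddCommGroup H] [InnerProductSpace ℂ H] [CompleteSpace H]
    (ρ : (X →ᵇ ℂ) →⋆ₐ[ℂ] (H →L[ℂ] H))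
    (Tn : ℕ → H →L[ℂ] H) (hTn : ∀ n, UniformlyPseudolocal ρ (Tn n))
    (T : H →L[ℂ] H) (hlim : Filter.Tendsto Tn Filter.atTop (nhds T)) :
    UniformlyPseudolocal ρ T := by
  intro R hR L hL
  refine UniformlyApproximable.of_forall_exists_near fun ε hε => ?_
  obtain ⟨n, hn⟩ : ∃ n, dist (Tn n) T < ε / 2 :=
    ((Metric.tendsto_atTop.mp hlim) (ε / 2) (half_pos hε)).imp fun n hn => hn n le_rfl
  refine ⟨_, hTn n R hR L hL, ?_⟩
  rintro _ ⟨f, hf, rfl⟩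
  refine ⟨_, ⟨f, hf, rfl⟩, ?_⟩
  have hρf : ‖ρ f‖ ≤ 1 := (NonUnitalStarAlgHom.norm_apply_le ρ f).trans hf.2.1
  calc ‖(T * ρ f - ρ f * T) - (Tn n * ρ f - ρ f * Tn n)‖
      ≤ 2 * ‖ρ f‖ * ‖T - Tn n‖ := norm_commutator_sub_commutator_le T (Tn n) (ρ f)
    _ ≤ 2 * 1 * ‖T - Tn n‖ := by gcongr
    _ < ε := by rw [← dist_eq_norm, dist_comm]; linarith

/-- The uniformly pseudolocal operators are closed in operator norm: an operator-norm limit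
of uniformly pseudolocal operators is uniformly pseudolocal. -/
theorem uniformlyPseudolocal_closed
    {X : Type*} [MetricSpace X]
    {H : Type*} [NormedAddCommGroup H] [InnerProductSpace ℂ H] [CompleteSpace H]
    (ρ : (X →ᵇ ℂ) →⋆ₐ[ℂ] (H →L[ℂ] H)) (hρ : Continuous ρ)
    (Tn : ℕ → H →L[ℂ] H) (hTn : ∀ n, UniformlyPseudolocal ρ (Tn n))
    (T : H →L[ℂ] H) (hlim : Filter.Tendsto Tn Filter.atTop (nhds T)) :
    UniformlyPseudolocal ρ T :=
  uniformlyPseudolocal_closed_general ρ Tn hTn T hlim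
end

section
/- Let X be a proper metric space, ρ : C_0(X) → B(H) a representation, and T ∈ B(H) uniformly locally compact. Then for every R > 0 the collection {ρ(f) T, T ρ(f) : f ∈ C_c(X), diam(supp f) ≤ R, ‖f‖_∞ ≤ 1} is uniformly approximable, i.e., the Lipschitz condition on f can be dropped. -/
/-!
Given `f` with support of diameter at most `R`, the thickened indicator `φ` of `supp f` is
`1`-Lipschitz, equals `1` on `supp f` and has support of diameter at most `R + 2`. Hence
`ρ(f) T = ρ(f) (ρ(φ) T)` and `T ρ(f) = (T ρ(φ)) ρ(f)`. As a star homomorphism of C⋆-algebras `ρ`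
is contractive, so multiplying a rank-`N` `ε`-approximant of `ρ(φ) T` (resp. `T ρ(φ)`) by
`ρ(f)` gives a rank-`N` `ε`-approximant of `ρ(f) T` (resp. `T ρ(f)`).
-/

open ZeroAtInfty

open Metric Function Set

theorem UniformlyApproximable.of_forall_eq_contraction_mul
    {H : Type*} [NormedAddCommGroup H] [InnerProductSpace ℂ H] {𝒜 ℬ : Set (H →L[ℂ] H)}
    (hℬ : UniformlyApproximable ℬ)
    (h𝒜 : ∀ A ∈ 𝒜, ∃ B ∈ ℬ, ∃ S : H →L[ℂ] H, ‖S‖ ≤ 1 ∧ (A = S * B ∨ A = B * S)) :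
    UniformlyApproximable 𝒜 := by
  intro ε hε
  obtain ⟨N, hN⟩ := hℬ ε hε
  refine ⟨N, fun A hA ↦ ?_⟩
  obtain ⟨B, hB, S, hS, rfl | rfl⟩ := h𝒜 A hA <;> obtain ⟨k, hk, hBk⟩ := hN B hB
  · refine ⟨S * k, (LinearMap.rank_comp_le_right (k : H →ₗ[ℂ] H) (S : H →ₗ[ℂ] H)).trans hk, ?_⟩
    calc ‖S * B - S * k‖ = ‖S * (B - k)‖ := by rw [mul_sub]
      _ ≤ ‖S‖ * ‖B - k‖ := norm_mul_le _ _
      _ ≤ 1 * ‖B - k‖ := by gcongr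
      _ < ε := by rwa [one_mul]
  · refine ⟨k * S, (LinearMap.rank_comp_le_left (S : H →ₗ[ℂ] H) (k : H →ₗ[ℂ] H)).trans hk, ?_⟩
    calc ‖B * S - k * S‖ = ‖(B - k) * S‖ := by rw [sub_mul]
      _ ≤ ‖B - k‖ * ‖S‖ := norm_mul_le _ _
      _ ≤ ‖B - k‖ * 1 := by gcongr
      _ < ε := by rwa [mul_one]

theorem exists_lipschitz_cutoff {X : Type*} [PseudoMetricSpace X] [ProperSpace X] {s : Set X}
    (hs : Bornology.IsBounded s) :
    ∃ φ : C₀(X, ℂ), HasCompactSupport ⇑φ ∧ LipschitzWith 1 ⇑φ ∧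
      diam (support ⇑φ) ≤ diam s + 2 ∧ ‖φ‖ ≤ 1 ∧ EqOn (⇑φ) 1 s := by
  let ψ := thickenedIndicator one_pos s
  have hψ_zero : ∀ y ∉ thickening 1 s, ψ y = 0 := fun y ↦ thickenedIndicator_zero one_pos s
  have hψ_one : ∀ y ∈ s, ψ y = 1 := fun y ↦ thickenedIndicator_one one_pos s
  have hψ_le : ∀ y, ψ y ≤ 1 := thickenedIndicator_le_one one_pos s
  have hcompact : HasCompactSupport fun y ↦ ((ψ y : ℝ) : ℂ) :=
    .intro (isCompact_of_isClosed_isBounded isClosed_cthickening (hs.cthickening (δ := 1)))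
      fun y hy ↦ by
        simp [hψ_zero y (mt (thickening_subset_cthickening 1 s ·) hy)]
  let φ : C₀(X, ℂ) := ⟨⟨fun y ↦ ((ψ y : ℝ) : ℂ), by fun_prop⟩, hcompact.is_zero_at_infty⟩
  refine ⟨φ, hcompact, ?_, ?_, ?_, fun y hy ↦ ?_⟩
  · have h := Complex.isometry_ofReal.lipschitz.comp
      (NNReal.isometry_coe.lipschitz.comp (lipschitzWith_thickenedIndicator one_pos s))
    rwa [Real.toNNReal_one, inv_one, mul_one, mul_one] at h
  · calc diam (support ⇑φ) ≤ diam (thickening 1 s) :=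
          diam_mono (fun y hy ↦ by_contra fun h ↦ hy (by simp [φ, hψ_zero y h])) hs.thickening
      _ ≤ diam s + 2 := by simpa using diam_thickening_le s zero_le_one
  · rw [← ZeroAtInftyContinuousMap.norm_toBCF_eq_norm,
      BoundedContinuousFunction.norm_le zero_le_one]
    intro y
    simpa [φ] using hψ_le y
  · simp [φ, hψ_one y hy]

theorem ZeroAtInftyContinuousMap.mul_eq_left_of_eqOn_one {X 𝕜 : Type*} [TopologicalSpace X]
    [NormedRing 𝕜] {f φ : C₀(X, 𝕜)} (hφ : EqOn (⇑φ) 1 (support ⇑f)) : f * φ = f := by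
  ext y
  by_cases hy : f y = 0
  · simp [hy]
  · simp [hφ hy]

theorem uniformlyLocallyCompact_drop_lipschitz_general
    {X : Type*} [MetricSpace X] [ProperSpace X]
    {H : Type*} [NormedAddCommGroup H] [InnerProductSpace ℂ H] [CompleteSpace H]
    (ρ : C₀(X, ℂ) →⋆ₙₐ[ℂ] (H →L[ℂ] H))
    (T : H →L[ℂ] H)
    (hT : ∀ R > (0 : ℝ), ∀ L > (0 : ℝ),
      UniformlyApproximable
        {A | ∃ f : C₀(X, ℂ), HasCompactSupport ⇑f ∧ LipschitzWith (Real.toNNReal L) ⇑f ∧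
          Metric.diam (Function.support ⇑f) ≤ R ∧ ‖f‖ ≤ 1 ∧ (A = ρ f * T ∨ A = T * ρ f)}) :
    ∀ R > (0 : ℝ),
      UniformlyApproximable
        {A | ∃ f : C₀(X, ℂ), HasCompactSupport ⇑f ∧
          Metric.diam (Function.support ⇑f) ≤ R ∧ ‖f‖ ≤ 1 ∧ (A = ρ f * T ∨ A = T * ρ f)} := by
  intro R hR
  refine (hT (R + 2) (by positivity) 1 one_pos).of_forall_eq_contraction_mul ?_
  rintro A ⟨f, hf, hdiam, hnorm, hA⟩
  obtain ⟨φ, hφ_compact, hφ_lip, hφ_diam, hφ_norm, hφ_one⟩ :=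
    exists_lipschitz_cutoff (hf.isBounded.subset subset_closure)
  have hfφ : f * φ = f := ZeroAtInftyContinuousMap.mul_eq_left_of_eqOn_one hφ_one
  have hρf : ‖ρ f‖ ≤ 1 := (NonUnitalStarAlgHom.norm_apply_le ρ f).trans hnorm
  rw [← Real.toNNReal_one] at hφ_lip
  replace hφ_diam : diam (support ⇑φ) ≤ R + 2 := by linarith
  rcases hA with rfl | rfl
  · refine ⟨ρ φ * T, ⟨φ, hφ_compact, hφ_lip, hφ_diam, hφ_norm, .inl rfl⟩, ρ f, hρf, .inl ?_⟩
    rw [← mul_assoc, ← map_mul, hfφ]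
  · refine ⟨T * ρ φ, ⟨φ, hφ_compact, hφ_lip, hφ_diam, hφ_norm, .inr rfl⟩, ρ f, hρf, .inr ?_⟩
    rw [mul_assoc, ← map_mul, mul_comm, hfφ]

/-- On a proper metric space, if `T` is uniformly locally compact (w.r.t. a representation
`ρ : C₀(X) → B(H)`), i.e. for all `R, L > 0` the collection
`{ρ(f)T, Tρ(f) : f compactly supported, L-Lipschitz, diam(supp f) ≤ R, ‖f‖_∞ ≤ 1}` is
uniformly approximable, then for every `R > 0` the collection
`{ρ(f)T, Tρ(f) : f compactly supported, diam(supp f) ≤ R, ‖f‖_∞ ≤ 1}` is uniformly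
approximable: the Lipschitz condition can be dropped. -/
theorem uniformlyLocallyCompact_drop_lipschitz
    {X : Type*} [MetricSpace X] [ProperSpace X]
    {H : Type*} [NormedAddCommGroup H] [InnerProductSpace ℂ H] [CompleteSpace H]
    (ρ : C₀(X, ℂ) →⋆ₙₐ[ℂ] (H →L[ℂ] H)) (hρ : Continuous ρ)
    (T : H →L[ℂ] H)
    (hT : ∀ R > (0 : ℝ), ∀ L > (0 : ℝ),
      UniformlyApproximable
        {A | ∃ f : C₀(X, ℂ), HasCompactSupport ⇑f ∧ LipschitzWith (Real.toNNReal L) ⇑f ∧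
          Metric.diam (Function.support ⇑f) ≤ R ∧ ‖f‖ ≤ 1 ∧ (A = ρ f * T ∨ A = T * ρ f)}) :
    ∀ R > (0 : ℝ),
      UniformlyApproximable
        {A | ∃ f : C₀(X, ℂ), HasCompactSupport ⇑f ∧
          Metric.diam (Function.support ⇑f) ≤ R ∧ ‖f‖ ≤ 1 ∧ (A = ρ f * T ∨ A = T * ρ f)} :=
  uniformlyLocallyCompact_drop_lipschitz_general ρ T hT
end

section
/- Let V, W be topological vector spaces (or metrizable topological abelian groups), and let φ : V → W be a continuous linear map such that the induced map V/ker φ → im φ is a topological isomorphism onto im φ (with the subspace topology). Let φ̄ : V̄ → W̄ denote the continuous extension of φ to the completions. Then im φ̄ equals the closure of im φ in W̄. -/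
/-!
Density of `V` in `V̄` gives `im φ̄ ⊆ closure (im φ)`. Conversely, a point of the closure is
the limit of a Cauchy sequence `φ (x n)`. After passing to a subsequence whose increments
`φ (x (n + 1)) - φ (x n)` are small enough, the openness of `φ` onto its image lifts each
increment to some `u n` with `‖u n‖ < 2⁻ⁿ`. The partial sums `x 0 + ∑ u k` then form a Cauchy
sequence in `V` lying over the subsequence, and `φ̄` sends its limit in `V̄` to the given point.
-/

open UniformSpace Filter Topology

namespace AddMonoidHom

variable {V W : Type*} [SeminormedAddCommGroup V] [SeminormedAddCommGroup W]

theorem exists_norm_lt_map_eq_of_norm_lt (φ : V →+ W)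
    (hopen : ∀ U ∈ 𝓝 (0 : V), ∃ S ∈ 𝓝 (0 : W), S ∩ Set.range φ ⊆ φ '' U) {ε : ℝ} (hε : 0 < ε) :
    ∃ δ > 0, ∀ w ∈ Set.range φ, ‖w‖ < δ → ∃ u, ‖u‖ < ε ∧ φ u = w := by
  obtain ⟨S, hS, hSU⟩ := hopen _ (Metric.ball_mem_nhds 0 hε)
  obtain ⟨δ, hδ, hδS⟩ := Metric.mem_nhds_iff.mp hS
  refine ⟨δ, hδ, fun w hw hwδ => ?_⟩
  obtain ⟨u, hu, rfl⟩ := hSU ⟨hδS (mem_ball_zero_iff.mpr hwδ), hw⟩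
  exact ⟨u, mem_ball_zero_iff.mp hu, rfl⟩

theorem exists_cauchySeq_map_eq_of_norm_le (φ : V →+ W) {w : ℕ → W} (hw₀ : w 0 ∈ Set.range φ)
    {u : ℕ → V} (hu : ∀ n, φ (u n) = w (n + 1) - w n) (hu_le : ∀ n, ‖u n‖ ≤ (1 / 2) ^ n) :
    ∃ v : ℕ → V, CauchySeq v ∧ ∀ n, φ (v n) = w n := by
  obtain ⟨x₀, hx₀⟩ := hw₀
  refine ⟨fun n => x₀ + ∑ k ∈ Finset.range n, u k, ?_, fun n => ?_⟩
  · refine cauchySeq_of_dist_le_of_summable _ (fun n => ?_) summable_geometric_two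
    simpa [Finset.sum_range_succ, dist_eq_norm] using hu_le n
  · simp only [map_add, map_sum, hu, Finset.sum_range_sub, hx₀, add_sub_cancel]

theorem exists_cauchySeq_map_eq_subseq (φ : V →+ W)
    (hopen : ∀ U ∈ 𝓝 (0 : V), ∃ S ∈ 𝓝 (0 : W), S ∩ Set.range φ ⊆ φ '' U)
    {w : ℕ → W} (hw : CauchySeq w) (hw_range : ∀ n, w n ∈ Set.range φ) :
    ∃ σ : ℕ → ℕ, StrictMono σ ∧ ∃ v : ℕ → V, CauchySeq v ∧ ∀ n, φ (v n) = w (σ n) := by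
  choose δ hδ hlift using fun n : ℕ =>
    φ.exists_norm_lt_map_eq_of_norm_lt hopen (pow_pos (one_half_pos (α := ℝ)) n)
  obtain ⟨σ, hσ, hσδ⟩ := hw.subseq_mem fun n => Metric.dist_mem_uniformity (hδ n)
  have hinc : ∀ n, ∃ u, ‖u‖ < (1 / 2) ^ n ∧ φ u = w (σ (n + 1)) - w (σ n) := fun n =>
    hlift n _ (φ.range.sub_mem (hw_range _) (hw_range _)) (by simpa [dist_eq_norm] using hσδ n)
  choose u hu_lt hu using hinc
  exact ⟨σ, hσ, φ.exists_cauchySeq_map_eq_of_norm_le (hw_range _) hu fun n => (hu_lt n).le⟩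

end AddMonoidHom

/-- Let `φ : V → W` be a continuous (uniformly continuous) additive group homomorphism of
(semi)metrizable topological abelian groups which induces a topological isomorphism
`V/ker φ ≅ im φ` — phrased as: the image of every neighborhood of `0` in `V` is a
neighborhood of `0` within `im φ`. Then the image of the extension
`φ̄ : V̄ → W̄` to the completions equals the closure of `im φ` in `W̄`. -/
theorem range_completion_map_eq_closure_range
    {V W : Type*} [SeminormedAddCommGroup V] [SeminormedAddCommGroup W]
    (φ : V →+ W) (hφ : UniformContinuous ⇑φ)
    (hopen : ∀ U ∈ nhds (0 : V), ∃ S ∈ nhds (0 : W), S ∩ Set.range ⇑φ ⊆ ⇑φ '' U) :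
    Set.range (Completion.map ⇑φ)
      = closure ((fun w : W => (w : Completion W)) '' Set.range ⇑φ) := by
  have himage : Completion.map φ '' Set.range ((↑) : V → Completion V) = (↑) '' Set.range φ := by
    simp only [← Set.range_comp, Function.comp_def, Completion.map_coe hφ]
  refine (himage ▸ Completion.continuous_map.range_subset_closure_image_dense
    Completion.denseRange_coe).antisymm fun y hy => ?_
  obtain ⟨z, hz, hzy⟩ := mem_closure_iff_seq_limit.mp hy
  choose w hw_range hwz using hz
  obtain rfl : (fun n => (w n : Completion W)) = z := funext hwz
  have hw : CauchySeq w :=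
    (Completion.isUniformInducing_coe W).cauchy_map_iff.mp (by rw [map_map]; exact hzy.cauchySeq)
  obtain ⟨σ, hσ, v, hv, hφv⟩ := φ.exists_cauchySeq_map_eq_subseq hopen hw hw_range
  obtain ⟨x, hx⟩ := cauchySeq_tendsto_of_complete
    ((Completion.uniformContinuous_coe V).comp_cauchySeq hv)
  refine ⟨x, tendsto_nhds_unique ((Completion.continuous_map.tendsto x).comp hx) ?_⟩
  simpa only [Function.comp_def, Completion.map_coe hφ, hφv] using hzy.comp hσ.tendsto_atTop
end
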